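/- For every integer t ≥ 1, the 3×3 real symmetric matrix Q = [[1, √t, 0], [√t, t+1, 1], [0, 1, 2]] has three eigenvalues y_1 > y_2 > y_3 satisfying: 2 < y_1 < t + 2 + 1/(4t); 3/2 < y_2 < 2; y_3 < 1, with y_3 > 0.19 if t = 1 and y_3 > 1/(4t) if t ≥ 2; and y_1 + y_2 = t + 4 − y_3. Furthermore, the second largest eigenvalue y_2 is strictly increasing as a function of t. -/

import Mathlib

/-! The characteristic polynomial of `Q` is `(x - 1)(x² - 3x + 1) - t·x(x - 2)`. Its signs at
`0, 3/2, 2, t + 2 + 1/(4t)` are `-, +, -, +`, which puts exactly one eigenvalue in each gap; the sign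
at `1`, `0.19` and `1/(4t)` refines the bounds on `y₃`, and the trace gives `y₁ + y₂ + y₃ = t + 4`.
Passing from `t` to `t' > t` adds `(t' - t)·x(2 - x)`, which is positive at `y₂ ∈ (0, 2)`; since
`y₁' > 2`, this forces `y₂ < y₂'`. -/

namespace LapPaper

/-- The matrix `Q` associated with a branch of type 2 having `t` leaves. -/
noncomputable def Qmat (t : ℕ) : Matrix (Fin 3) (Fin 3) ℝ :=
  !![(1 : ℝ), Real.sqrt t, 0; Real.sqrt t, (t : ℝ) + 1, 1; 0, 1, 2]

end LapPaper

namespace Matrix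

variable {R : Type*} [CommRing R] [IsDomain R] {A : Matrix (Fin 3) (Fin 3) R} {y₁ y₂ y₃ : R}

theorem charpoly_splits_of_roots_eq (h : A.charpoly.roots = {y₁, y₂, y₃}) : A.charpoly.Splits := by
  rw [Polynomial.splits_iff_card_roots, h, charpoly_natDegree_eq_dim]
  rfl

theorem charpoly_eval_eq_of_roots_eq (h : A.charpoly.roots = {y₁, y₂, y₃}) (x : R) :
    A.charpoly.eval x = (x - y₁) * (x - y₂) * (x - y₃) := by
  rw [(charpoly_splits_of_roots_eq h).eq_prod_roots, A.charpoly_monic.leadingCoeff, h]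
  simp [mul_assoc]

theorem trace_eq_add_of_charpoly_roots_eq (h : A.charpoly.roots = {y₁, y₂, y₃}) :
    A.trace = y₁ + y₂ + y₃ := by
  rw [trace_eq_sum_roots_charpoly_of_splits (charpoly_splits_of_roots_eq h), h]
  simp [add_assoc]

end Matrix

section CubicSigns

variable {R : Type*} [CommRing R] [LinearOrder R] [IsStrictOrderedRing R] {a y₁ y₂ y₃ : R}

theorem mem_Ioo_or_lt_of_prod_sub_neg (h₁₂ : y₂ < y₁)
    (h : (a - y₁) * (a - y₂) * (a - y₃) < 0) : (y₂ < a ∧ a < y₁) ∨ a < y₃ := by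
  rcases lt_or_ge a y₃ with h₃ | h₃
  · exact Or.inr h₃
  refine Or.inl ⟨?_, ?_⟩ <;> by_contra! h'
  · nlinarith [mul_nonneg (mul_nonneg (sub_nonneg.2 (h'.trans h₁₂.le)) (sub_nonneg.2 h'))
      (sub_nonneg.2 h₃)]
  · nlinarith [mul_nonneg (mul_nonneg (sub_nonneg.2 h') (sub_nonneg.2 (h₁₂.le.trans h')))
      (sub_nonneg.2 h₃)]

theorem lt_or_mem_Ioo_of_prod_sub_pos (h₂₃ : y₃ < y₂)
    (h : 0 < (a - y₁) * (a - y₂) * (a - y₃)) : y₁ < a ∨ (y₃ < a ∧ a < y₂) := by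
  rcases lt_or_ge y₁ a with h₁ | h₁
  · exact Or.inl h₁
  refine Or.inr ⟨?_, ?_⟩ <;> by_contra! h'
  · nlinarith [mul_nonneg (mul_nonneg (sub_nonneg.2 h₁) (sub_nonneg.2 (h'.trans h₂₃.le)))
      (sub_nonneg.2 h')]
  · nlinarith [mul_nonneg (mul_nonneg (sub_nonneg.2 h₁) (sub_nonneg.2 h'))
      (sub_nonneg.2 (h₂₃.le.trans h'))]

theorem roots_mem_Ioo_of_sign_changes (h₁₂ : y₂ < y₁) (h₂₃ : y₃ < y₂) {b c d : R}
    (hab : a < b) (hbc : b < c) (hcd : c < d)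
    (ha : (a - y₁) * (a - y₂) * (a - y₃) < 0) (hb : 0 < (b - y₁) * (b - y₂) * (b - y₃))
    (hc : (c - y₁) * (c - y₂) * (c - y₃) < 0) (hd : 0 < (d - y₁) * (d - y₂) * (d - y₃)) :
    (a < y₃ ∧ y₃ < b) ∧ (b < y₂ ∧ y₂ < c) ∧ (c < y₁ ∧ y₁ < d) := by
  obtain ⟨hy₂c, hcy₁⟩ : y₂ < c ∧ c < y₁ := by
    refine (mem_Ioo_or_lt_of_prod_sub_neg h₁₂ hc).resolve_right fun hcy₃ => ?_
    rcases lt_or_mem_Ioo_of_prod_sub_pos h₂₃ hb with hb | hb <;> linarith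
  have hy₁d : y₁ < d := (lt_or_mem_Ioo_of_prod_sub_pos h₂₃ hd).resolve_right fun h => by linarith
  obtain ⟨hy₃b, hby₂⟩ : y₃ < b ∧ b < y₂ :=
    (lt_or_mem_Ioo_of_prod_sub_pos h₂₃ hb).resolve_left fun h => by linarith
  have hay₃ : a < y₃ := (mem_Ioo_or_lt_of_prod_sub_neg h₁₂ ha).resolve_left fun h => by linarith
  exact ⟨⟨hay₃, hy₃b⟩, ⟨hby₂, hy₂c⟩, ⟨hcy₁, hy₁d⟩⟩

end CubicSigns

namespace LapPaper

/-- `Qchar t x = det (x • 1 - Qmat t)`, written so that its dependence on `t` is affine. -/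
def Qchar (t x : ℝ) : ℝ := (x - 1) * (x ^ 2 - 3 * x + 1) - t * (x * (x - 2))

theorem charpoly_Qmat_eval (t : ℕ) (x : ℝ) : (Qmat t).charpoly.eval x = Qchar t x := by
  rw [Matrix.charpoly, Matrix.det_fin_three]
  simp [Qmat, Qchar]
  ring_nf

theorem trace_Qmat (t : ℕ) : (Qmat t).trace = t + 4 := by
  simp [Matrix.trace_fin_three, Qmat]
  ring

theorem Qchar_eq_of_roots_eq {t : ℕ} {y₁ y₂ y₃ : ℝ}
    (hroots : (Qmat t).charpoly.roots = {y₁, y₂, y₃}) (x : ℝ) :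
    Qchar t x = (x - y₁) * (x - y₂) * (x - y₃) := by
  rw [← charpoly_Qmat_eval, Matrix.charpoly_eval_eq_of_roots_eq hroots]

theorem Qchar_pos_at_upper_bound {t : ℕ} (ht : 1 ≤ t) : 0 < Qchar t (t + 2 + 1 / (4 * t)) := by
  have htR : (0 : ℝ) < t := by exact_mod_cast ht
  have hform : Qchar t (t + 2 + 1 / (4 * t)) = (4 * t ^ 2 - 4 * t - 1) ^ 2 / (64 * t ^ 3) := by
    unfold Qchar
    field_simp
    ring
  -- `4t² - 4t - 1` is odd, hence nonzero, at integers
  have hodd : (4 * t ^ 2 - 4 * t - 1 : ℝ) ≠ 0 := by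
    have : 4 * ((t : ℤ) * t) - 4 * t - 1 ≠ 0 := by omega
    exact_mod_cast (by simpa [sq] using this : (4 * (t : ℤ) ^ 2 - 4 * t - 1) ≠ 0)
  rw [hform]
  positivity

theorem Qchar_one_div_four_mul_neg {t : ℝ} (ht : 2 ≤ t) : Qchar t (1 / (4 * t)) < 0 := by
  have hform : Qchar t (1 / (4 * t)) = (-32 * t ^ 3 + 60 * t ^ 2 - 16 * t + 1) / (64 * t ^ 3) := by
    unfold Qchar
    field_simp
    ring
  rw [hform]
  apply div_neg_of_neg_of_pos
  · nlinarith [mul_nonneg (sub_nonneg.2 ht) (sq_nonneg t)]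
  · positivity

section Eigenvalues

variable {t : ℕ} {y₁ y₂ y₃ : ℝ}

theorem Qmat_eigenvalues_bounds (ht : 1 ≤ t) (hroots : (Qmat t).charpoly.roots = {y₁, y₂, y₃})
    (h₁₂ : y₂ < y₁) (h₂₃ : y₃ < y₂) :
    (2 < y₁ ∧ y₁ < t + 2 + 1 / (4 * t)) ∧ (3 / 2 < y₂ ∧ y₂ < 2) ∧ y₃ < 1 := by
  have hf := Qchar_eq_of_roots_eq hroots
  have htR : (1 : ℝ) ≤ t := by exact_mod_cast ht
  have h2u : (2 : ℝ) < t + 2 + 1 / (4 * t) := by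
    have : (0 : ℝ) < 1 / (4 * t) := by positivity
    linarith
  obtain ⟨-, hy₂, hy₁⟩ := roots_mem_Ioo_of_sign_changes h₁₂ h₂₃ (a := 0) (b := 3 / 2) (c := 2)
    (by norm_num) (by norm_num) h2u
    (by rw [← hf]; norm_num [Qchar]) (by rw [← hf]; norm_num [Qchar]; linarith)
    (by rw [← hf]; norm_num [Qchar]) (by rw [← hf]; exact Qchar_pos_at_upper_bound ht)
  have hy₃ : y₃ < 1 := by
    have h1 : 0 < (1 - y₁) * (1 - y₂) * (1 - y₃) := by rw [← hf]; norm_num [Qchar]; linarith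
    rcases lt_or_mem_Ioo_of_prod_sub_pos h₂₃ h1 with h | h <;> linarith
  exact ⟨hy₁, hy₂, hy₃⟩

theorem lt_smallest_eigenvalue_of_Qchar_neg (hroots : (Qmat t).charpoly.roots = {y₁, y₂, y₃})
    (h₁₂ : y₂ < y₁) {a : ℝ} (hay₂ : a < y₂) (ha : Qchar t a < 0) : a < y₃ := by
  rw [Qchar_eq_of_roots_eq hroots] at ha
  exact (mem_Ioo_or_lt_of_prod_sub_neg h₁₂ ha).resolve_left fun h => by linarith

theorem Qmat_second_eigenvalue_lt {t' : ℕ} {y₁' y₂' y₃' : ℝ} (ht : 1 ≤ t) (htt' : t < t')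
    (hroots : (Qmat t).charpoly.roots = {y₁, y₂, y₃}) (h₁₂ : y₂ < y₁) (h₂₃ : y₃ < y₂)
    (hroots' : (Qmat t').charpoly.roots = {y₁', y₂', y₃'}) (h₁₂' : y₂' < y₁')
    (h₂₃' : y₃' < y₂') : y₂ < y₂' := by
  obtain ⟨-, ⟨hy₂, hy₂'⟩, -⟩ := Qmat_eigenvalues_bounds ht hroots h₁₂ h₂₃
  obtain ⟨⟨hy₁', -⟩, -⟩ := Qmat_eigenvalues_bounds (ht.trans htt'.le) hroots' h₁₂' h₂₃'
  have htt'R : (t : ℝ) < t' := by exact_mod_cast htt'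
  have hpos : 0 < Qchar t' y₂ := by
    have hroot : Qchar t y₂ = 0 := by rw [Qchar_eq_of_roots_eq hroots]; ring
    have hshift : Qchar t' y₂ = Qchar t y₂ + (t' - t) * (y₂ * (2 - y₂)) := by unfold Qchar; ring
    rw [hshift, hroot, zero_add]
    exact mul_pos (by linarith) (mul_pos (by linarith) (by linarith))
  rw [Qchar_eq_of_roots_eq hroots'] at hpos
  rcases lt_or_mem_Ioo_of_prod_sub_pos h₂₃' hpos with h | h <;> linarith

end Eigenvalues

/-- For every integer `t ≥ 1`, the eigenvalues `y₁ > y₂ > y₃` of the matrix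
`Q = [[1, √t, 0], [√t, t+1, 1], [0, 1, 2]]` satisfy `2 < y₁ < t + 2 + 1/(4t)`,
`3/2 < y₂ < 2`, `y₃ < 1` with `y₃ > 0.19` for `t = 1` and `y₃ > 1/(4t)` for `t ≥ 2`, and
`y₁ + y₂ = t + 4 - y₃`. Moreover, the second eigenvalue `y₂` increases as `t` increases. -/
theorem eigenvalues_Q_matrix (t : ℕ) (ht : 1 ≤ t) (y1 y2 y3 : ℝ)
    (hroots : (Matrix.charpoly (Qmat t)).roots = {y1, y2, y3})
    (h12 : y2 < y1) (h23 : y3 < y2) :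
    (2 < y1 ∧ y1 < (t : ℝ) + 2 + 1 / (4 * t)) ∧
    (3 / 2 < y2 ∧ y2 < 2) ∧
    (y3 < 1 ∧ (t = 1 → 0.19 < y3) ∧ (2 ≤ t → 1 / (4 * (t : ℝ)) < y3)) ∧
    y1 + y2 = (t : ℝ) + 4 - y3 ∧
    (∀ t' : ℕ, t < t' → ∀ y1' y2' y3' : ℝ,
      (Matrix.charpoly (Qmat t')).roots = {y1', y2', y3'} →
      y2' < y1' → y3' < y2' → y2 < y2') := by
  obtain ⟨hy₁, hy₂, hy₃⟩ := Qmat_eigenvalues_bounds ht hroots h12 h23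
  refine ⟨hy₁, hy₂, ⟨hy₃, ?_, ?_⟩, ?_, ?_⟩
  · rintro rfl
    exact lt_smallest_eigenvalue_of_Qchar_neg hroots h12 (by linarith) (by norm_num [Qchar])
  · intro ht₂
    have ht₂R : (2 : ℝ) ≤ t := by exact_mod_cast ht₂
    refine lt_smallest_eigenvalue_of_Qchar_neg hroots h12 ?_ (Qchar_one_div_four_mul_neg ht₂R)
    calc 1 / (4 * (t : ℝ)) ≤ 1 / 8 := by gcongr; linarith
      _ < y2 := by linarith
  · have htrace := Matrix.trace_eq_add_of_charpoly_roots_eq hroots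
    rw [trace_Qmat] at htrace
    linarith
  · intro t' htt' y1' y2' y3' hroots' h12' h23'
    exact Qmat_second_eigenvalue_lt ht htt' hroots h12 h23 hroots' h12' h23'

end LapPaper
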